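/- Let E be a class of morphisms in a V-category B. If B is tensored and E is closed under tensors in B, then E^{↓V} = E^↓, i.e. a morphism is V-orthogonal to every member of E if and only if it is ordinarily orthogonal to every member of E. Dually, if M is a class of morphisms in a cotensored V-category B that is closed under cotensors, then M^{↑V} = M^↑. -/

import Mathlib

open CategoryTheory CategoryTheory.Limits CategoryTheory.MonoidalCategory

universe w v₁ v₂ v₃ v₄ u₁ u₂ u₃ u₄

namespace EnrichedFS

variable (V : Type u₁) [Category.{v₁} V] [MonoidalCategory V] [SymmetricCategory V]
  [MonoidalClosed V]
variable (B : Type u₂) [Category.{v₂} B] [EnrichedOrdinaryCategory V B]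

/-- `e` is `V`-orthogonal to `m`: the square of hom-objects
with top `B(A₂,m)`, left `B(e,X₁)`, right `B(e,X₂)`, bottom `B(A₁,m)`
is a pullback in `V`. -/
def VOrth {A₁ A₂ X₁ X₂ : B} (e : A₁ ⟶ A₂) (m : X₁ ⟶ X₂) : Prop :=
  IsPullback (eHomWhiskerLeft V A₂ m) (eHomWhiskerRight V e X₁)
    (eHomWhiskerRight V e X₂) (eHomWhiskerLeft V A₁ m)

/-- `H^{↓V}`: the class of morphisms to which every member of `H` is `V`-orthogonal. -/
def vRlp (H : MorphismProperty B) : MorphismProperty B :=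
  fun _ _ m => ∀ ⦃A₁ A₂ : B⦄ (e : A₁ ⟶ A₂), H e → VOrth V B e m

/-- `M^{↑V}`: the class of morphisms which are `V`-orthogonal to every member of `M`. -/
def vLlp (M : MorphismProperty B) : MorphismProperty B :=
  fun _ _ e => ∀ ⦃X₁ X₂ : B⦄ (m : X₁ ⟶ X₂), M m → VOrth V B e m

/-- ordinary orthogonality: unique diagonal fillers for every commutative square. -/
def OrdOrth {A₁ A₂ X₁ X₂ : B} (e : A₁ ⟶ A₂) (m : X₁ ⟶ X₂) : Prop :=
  ∀ (u : A₁ ⟶ X₁) (v : A₂ ⟶ X₂), u ≫ m = e ≫ v →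
    ∃! d : A₂ ⟶ X₁, e ≫ d = u ∧ d ≫ m = v

/-- `H^{↓}` (ordinary). -/
def ordRlp (H : MorphismProperty B) : MorphismProperty B :=
  fun _ _ m => ∀ ⦃A₁ A₂ : B⦄ (e : A₁ ⟶ A₂), H e → OrdOrth B e m

/-- `M^{↑}` (ordinary). -/
def ordLlp (M : MorphismProperty B) : MorphismProperty B :=
  fun _ _ e => ∀ ⦃X₁ X₂ : B⦄ (m : X₁ ⟶ X₂), M m → OrdOrth B e m

/-- `(E,M)` is a `V`-prefactorization system: `E^{↓V} = M` and `M^{↑V} = E`. -/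
def IsVPrefactorization (E M : MorphismProperty B) : Prop :=
  vRlp V B E = M ∧ vLlp V B M = E

/-- `(E,M)` is an ordinary prefactorization system. -/
def IsOrdPrefactorization (E M : MorphismProperty B) : Prop :=
  ordRlp B E = M ∧ ordLlp B M = E

/-- every morphism factors as a morphism in `E` followed by a morphism in `M`. -/
def FactorizationsExist (E M : MorphismProperty B) : Prop :=
  ∀ ⦃X Y : B⦄ (f : X ⟶ Y), ∃ (Z : B) (e : X ⟶ Z) (m : Z ⟶ Y), E e ∧ M m ∧ e ≫ m = f

/-- `(E,M)` is a `V`-factorization system. -/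
def IsVFactorizationSystem (E M : MorphismProperty B) : Prop :=
  IsVPrefactorization V B E M ∧ FactorizationsExist B E M

/-- `(E,M)` is an ordinary factorization system. -/
def IsOrdFactorizationSystem (E M : MorphismProperty B) : Prop :=
  IsOrdPrefactorization B E M ∧ FactorizationsExist B E M

/-- intersection of two classes of morphisms. -/
def interProp (M N : MorphismProperty B) : MorphismProperty B := fun _ _ f => M f ∧ N f

/-- `V`-monomorphisms. -/
def vMono : MorphismProperty B := fun _ _ m => ∀ A : B, Mono (eHomWhiskerLeft V A m)

/-- `V`-epimorphisms. -/
def vEpi : MorphismProperty B := fun _ _ e => ∀ A : B, Mono (eHomWhiskerRight V e A)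

/-- `V`-strong monomorphisms. -/
def vStrongMono : MorphismProperty B := fun _ _ m =>
  vMono V B m ∧ ∀ ⦃A₁ A₂ : B⦄ (e : A₁ ⟶ A₂), vEpi V B e → VOrth V B e m

/-- `V`-strong epimorphisms. -/
def vStrongEpi : MorphismProperty B := fun _ _ e =>
  vEpi V B e ∧ ∀ ⦃X₁ X₂ : B⦄ (m : X₁ ⟶ X₂), vMono V B m → VOrth V B e m

/-- ordinary monomorphisms, as a class. -/
def ordMono : MorphismProperty B := fun _ _ m => Mono m

/-- ordinary epimorphisms, as a class. -/
def ordEpi : MorphismProperty B := fun _ _ e => Epi e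

/-- ordinary strong monomorphisms. -/
def ordStrongMono : MorphismProperty B := fun _ _ m =>
  Mono m ∧ ∀ ⦃A₁ A₂ : B⦄ (e : A₁ ⟶ A₂), Epi e → OrdOrth B e m

/-- ordinary strong epimorphisms. -/
def ordStrongEpi : MorphismProperty B := fun _ _ e =>
  Epi e ∧ ∀ ⦃X₁ X₂ : B⦄ (m : X₁ ⟶ X₂), Mono m → OrdOrth B e m

/-- closure under composition with isomorphisms on either side. -/
def ClosedUnderIsoComp (E : MorphismProperty B) : Prop :=
  (∀ ⦃X Y Z : B⦄ (e : X ⟶ Y) (i : Y ⟶ Z), E e → IsIso i → E (e ≫ i)) ∧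
  (∀ ⦃X Y Z : B⦄ (i : X ⟶ Y) (e : Y ⟶ Z), IsIso i → E e → E (i ≫ e))

/-- a commutative square which is a `V`-pullback: it is sent to a pullback square
in `V` by every hom functor `B(A,-)`. -/
def IsVPullbackSq {P X Y Z : B} (p₁ : P ⟶ X) (p₂ : P ⟶ Y) (f : X ⟶ Z) (g : Y ⟶ Z) : Prop :=
  p₁ ≫ f = p₂ ≫ g ∧
    ∀ A : B, IsPullback (eHomWhiskerLeft V A p₁) (eHomWhiskerLeft V A p₂)
      (eHomWhiskerLeft V A f) (eHomWhiskerLeft V A g)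

/-- a commutative square which is a `V`-pushout: it is sent to a pullback square
in `V` by every hom functor `B(-,A)`. -/
def IsVPushoutSq {X Y₁ Y₂ Q : B} (f₁ : X ⟶ Y₁) (f₂ : X ⟶ Y₂) (i₁ : Y₁ ⟶ Q) (i₂ : Y₂ ⟶ Q) :
    Prop :=
  f₁ ≫ i₁ = f₂ ≫ i₂ ∧
    ∀ A : B, IsPullback (eHomWhiskerRight V i₁ A) (eHomWhiskerRight V i₂ A)
      (eHomWhiskerRight V f₁ A) (eHomWhiskerRight V f₂ A)

/-- `B` has `V`-kernel pairs. -/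
def HasVKernelPairs : Prop :=
  ∀ ⦃X Y : B⦄ (f : X ⟶ Y), ∃ (P : B) (p₁ p₂ : P ⟶ X), IsVPullbackSq V B p₁ p₂ f f

/-- `B` has `V`-cokernel pairs. -/
def HasVCokernelPairs : Prop :=
  ∀ ⦃X Y : B⦄ (f : X ⟶ Y), ∃ (Q : B) (i₁ i₂ : Y ⟶ Q), IsVPushoutSq V B f f i₁ i₂

/-- `m : P ⟶ C` is a `V`-fibre-product (`V`-wide-pullback) of the family `f i : X i ⟶ C`,
with projections `π i`. -/
def IsVFibreProduct {ι : Type w} {C : B} {X : ι → B} (f : ∀ i, X i ⟶ C)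
    {P : B} (m : P ⟶ C) (π : ∀ i, P ⟶ X i) : Prop :=
  (∀ i, π i ≫ f i = m) ∧
    ∀ (A : B) (Z : V) (z : Z ⟶ (A ⟶[V] C)) (zi : ∀ i, Z ⟶ (A ⟶[V] X i)),
      (∀ i, zi i ≫ eHomWhiskerLeft V A (f i) = z) →
        ∃! t : Z ⟶ (A ⟶[V] P), t ≫ eHomWhiskerLeft V A m = z ∧
          ∀ i, t ≫ eHomWhiskerLeft V A (π i) = zi i

/-- `m : P ⟶ C` is an ordinary fibre product (wide pullback) of the family `f i : X i ⟶ C`. -/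
def OrdIsFibreProduct {ι : Type w} {C : B} {X : ι → B} (f : ∀ i, X i ⟶ C)
    {P : B} (m : P ⟶ C) (π : ∀ i, P ⟶ X i) : Prop :=
  (∀ i, π i ≫ f i = m) ∧
    ∀ ⦃W' : B⦄ (z : W' ⟶ C) (zi : ∀ i, W' ⟶ X i), (∀ i, zi i ≫ f i = z) →
      ∃! t : W' ⟶ P, t ≫ m = z ∧ ∀ i, t ≫ π i = zi i

/-- a cone is a `V`-limit cone: it is sent to a limit cone in `V` by every `B(A,-)`. -/
def IsVLimitCone {J : Type u₃} [Category.{v₃} J] {D : J ⥤ B} (c : Cone D) : Prop :=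
  ∀ (A : B) (Z : V) (z : ∀ j : J, Z ⟶ (A ⟶[V] D.obj j)),
    (∀ ⦃j j' : J⦄ (φ : j ⟶ j'), z j ≫ eHomWhiskerLeft V A (D.map φ) = z j') →
      ∃! t : Z ⟶ (A ⟶[V] c.pt), ∀ j, t ≫ eHomWhiskerLeft V A (c.π.app j) = z j

/-- a cocone is a `V`-colimit cocone: it is sent to a limit cone in `V` by every `B(-,A)`. -/
def IsVColimitCocone {J : Type u₃} [Category.{v₃} J] {D : J ⥤ B} (c : Cocone D) : Prop :=
  ∀ (A : B) (Z : V) (z : ∀ j : J, Z ⟶ (D.obj j ⟶[V] A)),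
    (∀ ⦃j j' : J⦄ (φ : j ⟶ j'), z j' ≫ eHomWhiskerRight V (D.map φ) A = z j) →
      ∃! t : Z ⟶ (c.pt ⟶[V] A), ∀ j, t ≫ eHomWhiskerRight V (c.ι.app j) A = z j

/-- `B` has small `V`-limits. -/
def HasSmallVLimits : Prop :=
  ∀ (J : Type v₂) [SmallCategory J] (D : J ⥤ B), ∃ c : Cone D, IsVLimitCone V B c

/-- `B` has small `V`-colimits. -/
def HasSmallVColimits : Prop :=
  ∀ (J : Type v₂) [SmallCategory J] (D : J ⥤ B), ∃ c : Cocone D, IsVColimitCocone V B c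

/-- `B` has finite `V`-limits. -/
def HasFiniteVLimits : Prop :=
  ∀ (J : Type) [SmallCategory J] [FinCategory J] (D : J ⥤ B),
    ∃ c : Cone D, IsVLimitCone V B c

/-- `B` is well-powered with respect to the class `M`: every object has,
up to isomorphism, only a set of `M`-subobjects. -/
def WellPoweredWrt (M : MorphismProperty B) : Prop :=
  ∀ X : B, ∃ (ι : Type v₂) (Y : ι → B) (f : ∀ i, Y i ⟶ X), (∀ i, M (f i)) ∧
    ∀ ⦃Z : B⦄ (g : Z ⟶ X), M g → ∃ (i : ι) (h : Z ≅ Y i), h.hom ≫ f i = g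

/-- `B` is co-well-powered with respect to the class `E`. -/
def CoWellPoweredWrt (E : MorphismProperty B) : Prop :=
  ∀ X : B, ∃ (ι : Type v₂) (Y : ι → B) (f : ∀ i, X ⟶ Y i), (∀ i, E (f i)) ∧
    ∀ ⦃Z : B⦄ (g : X ⟶ Z), E g → ∃ (i : ι) (h : Y i ≅ Z), f i ≫ h.hom = g

/-- comparison morphism `B(T, X) ⟶ [v, B(A, X)]` in `V` induced by a
unit `η : v ⟶ B(A, T)`, where `T` is a candidate tensor `v ⊗ A`. -/
def tensorComparison {v : V} {A T : B} (η : v ⟶ (A ⟶[V] T)) (X : B) :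
    (T ⟶[V] X) ⟶ (ihom v).obj (A ⟶[V] X) :=
  MonoidalClosed.curry (eComp V A T X) ≫ (MonoidalClosed.pre η).app (A ⟶[V] X)

/-- `η : v ⟶ B(A,T)` exhibits `T` as a tensor `v ⊗ A` in the enriched sense. -/
def IsTensorUnit (v : V) (A T : B) (η : v ⟶ (A ⟶[V] T)) : Prop :=
  ∀ X : B, IsIso (tensorComparison V B η X)

/-- `B` is tensored over `V`. -/
def Tensored : Prop :=
  ∀ (v : V) (A : B), ∃ (T : B) (η : v ⟶ (A ⟶[V] T)), IsTensorUnit V B v A T η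

/-- `E` is closed under tensors: whenever tensors exist, `v ⊗ e` lies in `E` for `e ∈ E`. -/
def ClosedUnderTensors (E : MorphismProperty B) : Prop :=
  ∀ (v : V) ⦃A₁ A₂ : B⦄ (e : A₁ ⟶ A₂) {T₁ T₂ : B}
    (η₁ : v ⟶ (A₁ ⟶[V] T₁)) (η₂ : v ⟶ (A₂ ⟶[V] T₂)),
    IsTensorUnit V B v A₁ T₁ η₁ → IsTensorUnit V B v A₂ T₂ η₂ → E e →
      ∀ t : T₁ ⟶ T₂, η₁ ≫ eHomWhiskerLeft V A₁ t = η₂ ≫ eHomWhiskerRight V e T₂ → E t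

/-- comparison morphism `B(A, C) ⟶ [v, B(A, X)]` in `V` induced by a
counit `ε : v ⟶ B(C, X)`, where `C` is a candidate cotensor `[v, X]`. -/
def cotensorComparison {v : V} {C X : B} (ε : v ⟶ (C ⟶[V] X)) (A : B) :
    (A ⟶[V] C) ⟶ (ihom v).obj (A ⟶[V] X) :=
  MonoidalClosed.curry ((β_ (C ⟶[V] X) (A ⟶[V] C)).hom ≫ eComp V A C X) ≫
    (MonoidalClosed.pre ε).app (A ⟶[V] X)

/-- `ε : v ⟶ B(C,X)` exhibits `C` as a cotensor `[v, X]` in the enriched sense. -/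
def IsCotensorCounit (v : V) (X C : B) (ε : v ⟶ (C ⟶[V] X)) : Prop :=
  ∀ A : B, IsIso (cotensorComparison V B ε A)

/-- `B` is cotensored over `V`. -/
def Cotensored : Prop :=
  ∀ (v : V) (X : B), ∃ (C : B) (ε : v ⟶ (C ⟶[V] X)), IsCotensorCounit V B v X C ε

/-- `M` is closed under cotensors: `[v, m]` lies in `M` for `m ∈ M`. -/
def ClosedUnderCotensors (M : MorphismProperty B) : Prop :=
  ∀ (v : V) ⦃X₁ X₂ : B⦄ (m : X₁ ⟶ X₂) {C₁ C₂ : B}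
    (ε₁ : v ⟶ (C₁ ⟶[V] X₁)) (ε₂ : v ⟶ (C₂ ⟶[V] X₂)),
    IsCotensorCounit V B v X₁ C₁ ε₁ → IsCotensorCounit V B v X₂ C₂ ε₂ → M m →
      ∀ t : C₁ ⟶ C₂, ε₁ ≫ eHomWhiskerLeft V C₁ m = ε₂ ≫ eHomWhiskerRight V t X₂ → M t

/-- a `V`-functor from a `V`-category `J` to an enriched ordinary category `D`. -/
structure VFunctor (J : Type u₃) [EnrichedCategory V J]
    (D : Type u₄) [Category.{v₄} D] [EnrichedOrdinaryCategory V D] where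
  obj : J → D
  emap : ∀ X Y : J, (X ⟶[V] Y) ⟶ (obj X ⟶[V] obj Y)
  emap_id : ∀ X : J, eId V X ≫ emap X X = eId V (obj X)
  emap_comp : ∀ X Y Z : J,
    eComp V X Y Z ≫ emap X Z = (emap X Y ⊗ₘ emap Y Z) ≫ eComp V (obj X) (obj Y) (obj Z)

/-- the underlying action of a `V`-functor on ordinary morphisms. -/
def VFunctor.map' {J : Type u₃} [Category.{v₃} J] [EnrichedOrdinaryCategory V J]
    {D : Type u₄} [Category.{v₄} D] [EnrichedOrdinaryCategory V D]
    (F : VFunctor V J D) {X Y : J} (f : X ⟶ Y) : F.obj X ⟶ F.obj Y :=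
  (eHomEquiv V).symm (eHomEquiv V f ≫ F.emap X Y)

/-- a `V`-adjunction `F ⊣ G`, given by a `V`-natural isomorphism
`D(F A, X) ≅ A(A, G X)` of hom-objects. -/
structure VAdjunction {A : Type u₃} [Category.{v₃} A] [EnrichedOrdinaryCategory V A]
    {D : Type u₄} [Category.{v₄} D] [EnrichedOrdinaryCategory V D]
    (F : VFunctor V A D) (G : VFunctor V D A) where
  iso : ∀ (X : A) (Y : D), (F.obj X ⟶[V] Y) ≅ (X ⟶[V] G.obj Y)
  nat_right : ∀ (X : A) (Y Y' : D),
    eComp V (F.obj X) Y Y' ≫ (iso X Y').hom =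
      ((iso X Y).hom ⊗ₘ G.emap Y Y') ≫ eComp V X (G.obj Y) (G.obj Y')
  nat_left : ∀ (X X' : A) (Y : D),
    (F.emap X X' ▷ (F.obj X' ⟶[V] Y)) ≫ eComp V (F.obj X) (F.obj X') Y ≫ (iso X Y).hom =
      ((X ⟶[V] X') ◁ (iso X' Y).hom) ≫ eComp V X X' (G.obj Y)

/-- a `V`-functor `J → V` (a weight), presented by its uncurried action. -/
structure VWeight (J : Type u₃) [EnrichedCategory V J] where
  obj : J → V
  act : ∀ j j' : J, obj j ⊗ (j ⟶[V] j') ⟶ obj j'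
  act_id : ∀ j : J, (obj j ◁ eId V j) ≫ act j j = (ρ_ (obj j)).hom
  act_comp : ∀ j j' j'' : J,
    (α_ (obj j) (j ⟶[V] j') (j' ⟶[V] j'')).inv ≫ (act j j' ▷ (j' ⟶[V] j'')) ≫ act j' j'' =
      (obj j ◁ eComp V j j' j'') ≫ act j j''

/-- a `V`-natural transformation between `V`-functors. -/
structure VNatTrans {J : Type u₃} [EnrichedCategory V J]
    {D : Type u₄} [Category.{v₄} D] [EnrichedOrdinaryCategory V D]
    (F G : VFunctor V J D) where
  app : ∀ j : J, F.obj j ⟶ G.obj j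
  naturality : ∀ j j' : J,
    F.emap j j' ≫ eHomWhiskerLeft V (F.obj j) (app j') =
      G.emap j j' ≫ eHomWhiskerRight V (app j) (G.obj j')

/-- `cone` exhibits `L` as the `V`-enriched weighted (indexed) limit `[W, F]`. -/
structure IsWeightedLimit {J : Type u₃} [EnrichedCategory V J]
    {D : Type u₄} [Category.{v₄} D] [EnrichedOrdinaryCategory V D]
    (W : VWeight V J) (F : VFunctor V J D) (L : D)
    (cone : ∀ j : J, W.obj j ⟶ (L ⟶[V] F.obj j)) : Prop where
  natural : ∀ j j' : J,
    W.act j j' ≫ cone j' =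
      (cone j ▷ (j ⟶[V] j')) ≫ ((L ⟶[V] F.obj j) ◁ F.emap j j') ≫
        eComp V L (F.obj j) (F.obj j')
  universal : ∀ (A : D) (Z : V) (μ : ∀ j : J, Z ⊗ W.obj j ⟶ (A ⟶[V] F.obj j)),
    (∀ j j' : J,
      (Z ◁ W.act j j') ≫ μ j' =
        (α_ Z (W.obj j) (j ⟶[V] j')).inv ≫ (μ j ▷ (j ⟶[V] j')) ≫
          ((A ⟶[V] F.obj j) ◁ F.emap j j') ≫ eComp V A (F.obj j) (F.obj j')) →
      ∃! t : Z ⟶ (A ⟶[V] L), ∀ j : J,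
        (t ▷ W.obj j) ≫ ((A ⟶[V] L) ◁ cone j) ≫ eComp V A L (F.obj j) = μ j

/-- `B` is `V`-finitely-well-complete: it has finite `V`-limits and `V`-intersections
of arbitrary class-indexed families of `V`-strong monomorphisms. -/
def VFinitelyWellComplete : Prop :=
  HasFiniteVLimits V B ∧
    ∀ {ι : Type (max u₂ v₂)} {C : B} (X : ι → B) (f : ∀ i, X i ⟶ C),
      (∀ i, vStrongMono V B (f i)) →
        ∃ (P : B) (m : P ⟶ C) (π : ∀ i, P ⟶ X i), IsVFibreProduct V B f m π

/-- `B` is finitely well-complete (ordinary sense): it has finite limits and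
intersections of arbitrary class-indexed families of strong monomorphisms. -/
def OrdFinitelyWellComplete : Prop :=
  HasFiniteLimits B ∧
    ∀ {ι : Type (max u₂ v₂)} {C : B} (X : ι → B) (f : ∀ i, X i ⟶ C),
      (∀ i, ordStrongMono B (f i)) →
        ∃ (P : B) (m : P ⟶ C) (π : ∀ i, P ⟶ X i), OrdIsFibreProduct B f m π

end EnrichedFS

/-!
Fix `Z : V`. Testing the pullback square defining `e ↓_V m` against generalized elements
`Z ⟶ B(A, X)` is the same as testing ordinary orthogonality on the hom-sets `B(T, X)` of any
object `T` with `B(T, -) ≅ V(Z, B(A, -))`, that is of the tensor `T = Z ⊗ A`. Hence `e ↓_V m`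
holds iff `Z ⊗ e ↓ m` for every `Z`, and if `E` is closed under tensors, then `E^{↓V} = E^↓`.
For `Z = 𝟙` one may take `T = A`, so `e ↓_V m` always implies `e ↓ m`.
The cotensor statement is the tensor statement for `Bᵒᵖ`, whose tensors are the cotensors of `B`.
-/

namespace CategoryTheory

open Opposite

variable (V : Type u₁) [Category.{v₁} V] [MonoidalCategory V]
  {C : Type u₂} [Category.{v₂} C] [EnrichedOrdinaryCategory V C]

lemma eHomEquiv_comp_eq_comp_eHomWhiskerLeft {X Y Z : C} (f : X ⟶ Y) (g : Y ⟶ Z) :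
    eHomEquiv V (f ≫ g) = eHomEquiv V f ≫ eHomWhiskerLeft V X g := by
  rw [eHomEquiv_comp, eHomWhiskerLeft, MonoidalCategory.tensorHom_def,
    rightUnitor_inv_naturality_assoc, unitors_inv_equal, Category.assoc]

lemma eHomEquiv_comp_eq_comp_eHomWhiskerRight {X Y Z : C} (f : X ⟶ Y) (g : Y ⟶ Z) :
    eHomEquiv V (f ≫ g) = eHomEquiv V g ≫ eHomWhiskerRight V f Z := by
  rw [eHomEquiv_comp, eHomWhiskerRight, tensorHom_def', leftUnitor_inv_naturality_assoc,
    Category.assoc]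

section Braided

variable [BraidedCategory V]

lemma eHomWhiskerLeft_op (X : Cᵒᵖ) {Y Y' : Cᵒᵖ} (g : Y ⟶ Y') :
    eHomWhiskerLeft V X g = eHomWhiskerRight V g.unop X.unop := by
  change (ρ_ (Y.unop ⟶[V] X.unop)).inv ≫ (Y.unop ⟶[V] X.unop) ◁ eHomEquiv V g.unop ≫
    (β_ _ _).hom ≫ eComp V Y'.unop Y.unop X.unop = _
  rw [BraidedCategory.braiding_naturality_right_assoc, rightUnitor_inv_braiding_assoc,
    eHomWhiskerRight]

lemma eHomWhiskerRight_op {X X' : Cᵒᵖ} (f : X ⟶ X') (Y : Cᵒᵖ) :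
    eHomWhiskerRight V f Y = eHomWhiskerLeft V Y.unop f.unop := by
  change (λ_ (Y.unop ⟶[V] X'.unop)).inv ≫ eHomEquiv V f.unop ▷ (Y.unop ⟶[V] X'.unop) ≫
    (β_ _ _).hom ≫ eComp V Y.unop X'.unop X.unop = _
  rw [BraidedCategory.braiding_naturality_left_assoc, leftUnitor_inv_braiding_assoc,
    eHomWhiskerLeft]

end Braided

end CategoryTheory

namespace EnrichedFS

open Opposite

section

variable {V : Type u₁} [Category.{v₁} V] [MonoidalCategory V]
  {B : Type u₂} [Category.{v₂} B] [EnrichedOrdinaryCategory V B]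

def VOrthAt (Z : V) {A₁ A₂ X₁ X₂ : B} (e : A₁ ⟶ A₂) (m : X₁ ⟶ X₂) : Prop :=
  ∀ (u : Z ⟶ (A₁ ⟶[V] X₁)) (v : Z ⟶ (A₂ ⟶[V] X₂)),
    u ≫ eHomWhiskerLeft V A₁ m = v ≫ eHomWhiskerRight V e X₂ →
      ∃! d : Z ⟶ (A₂ ⟶[V] X₁),
        d ≫ eHomWhiskerRight V e X₁ = u ∧ d ≫ eHomWhiskerLeft V A₂ m = v

lemma vOrthAt_iff_ordOrth {Z : V} {A₁ A₂ T₁ T₂ X₁ X₂ : B} {e : A₁ ⟶ A₂} {t : T₁ ⟶ T₂}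
    {m : X₁ ⟶ X₂} (ψ₁ : ∀ X, (T₁ ⟶ X) ≃ (Z ⟶ (A₁ ⟶[V] X)))
    (ψ₂ : ∀ X, (T₂ ⟶ X) ≃ (Z ⟶ (A₂ ⟶[V] X)))
    (hψ₁ : ∀ {X Y} (f : T₁ ⟶ X) (g : X ⟶ Y), ψ₁ Y (f ≫ g) = ψ₁ X f ≫ eHomWhiskerLeft V A₁ g)
    (hψ₂ : ∀ {X Y} (f : T₂ ⟶ X) (g : X ⟶ Y), ψ₂ Y (f ≫ g) = ψ₂ X f ≫ eHomWhiskerLeft V A₂ g)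
    (hψt : ∀ {X} (f : T₂ ⟶ X), ψ₁ X (t ≫ f) = ψ₂ X f ≫ eHomWhiskerRight V e X) :
    VOrthAt Z e m ↔ OrdOrth B t m := by
  symm
  refine (ψ₁ X₁).forall_congr fun u => (ψ₂ X₂).forall_congr fun v => ?_
  rw [← hψt, ← hψ₁, (ψ₁ X₂).apply_eq_iff_eq]
  refine imp_congr_right fun _ => (ψ₂ X₁).existsUnique_congr fun d => ?_
  rw [← hψt, ← hψ₂, (ψ₁ X₁).apply_eq_iff_eq, (ψ₂ X₂).apply_eq_iff_eq]

lemma vOrth_iff_forall_vOrthAt {A₁ A₂ X₁ X₂ : B} {e : A₁ ⟶ A₂} {m : X₁ ⟶ X₂} :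
    VOrth V B e m ↔ ∀ Z : V, VOrthAt Z e m := by
  refine ⟨fun h Z u v w => ⟨h.lift v u w.symm, ⟨h.lift_snd _ _ _, h.lift_fst _ _ _⟩,
    fun d ⟨hd₁, hd₂⟩ => h.hom_ext (by rw [hd₂, h.lift_fst]) (by rw [hd₁, h.lift_snd])⟩,
    fun h => ?_⟩
  have H := fun s : PullbackCone (eHomWhiskerRight V e X₂) (eHomWhiskerLeft V A₁ m) =>
    h s.pt s.snd s.fst s.condition.symm
  exact IsPullback.of_isLimit' ⟨eHom_whisker_exchange V e m⟩ (PullbackCone.IsLimit.mk _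
    (fun s => (H s).choose) (fun s => (H s).choose_spec.1.2) (fun s => (H s).choose_spec.1.1)
    (fun s l h₁ h₂ => (H s).choose_spec.2 l ⟨h₂, h₁⟩))

lemma VOrth.ordOrth {A₁ A₂ X₁ X₂ : B} {e : A₁ ⟶ A₂} {m : X₁ ⟶ X₂} (h : VOrth V B e m) :
    OrdOrth B e m :=
  (vOrthAt_iff_ordOrth (fun _ => eHomEquiv V) (fun _ => eHomEquiv V)
    (eHomEquiv_comp_eq_comp_eHomWhiskerLeft V) (eHomEquiv_comp_eq_comp_eHomWhiskerLeft V)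
    (eHomEquiv_comp_eq_comp_eHomWhiskerRight V e)).1 (vOrth_iff_forall_vOrthAt.1 h (𝟙_ V))

end

section Tensor

variable {V : Type u₁} [Category.{v₁} V] [MonoidalCategory V] [MonoidalClosed V]
  {B : Type u₂} [Category.{v₂} B] [EnrichedOrdinaryCategory V B]

lemma tensorComparison_uncurry {v : V} {A T X : B} (η : v ⟶ (A ⟶[V] T)) (f : T ⟶ X) :
    (ρ_ v).inv ≫ MonoidalClosed.uncurry (eHomEquiv V f ≫ tensorComparison V B η X) =
      η ≫ eHomWhiskerLeft V A f := by
  rw [tensorComparison, ← Category.assoc (eHomEquiv V f), MonoidalClosed.uncurry_natural_left,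
    MonoidalClosed.uncurry_pre, MonoidalCategory.whiskerLeft_comp_assoc, whisker_exchange_assoc,
    whisker_exchange_assoc, ← rightUnitor_inv_naturality_assoc, eHomWhiskerLeft,
    ← MonoidalClosed.uncurry_eq, MonoidalClosed.uncurry_curry]

namespace IsTensorUnit

variable {v : V} {A T : B} {η : v ⟶ (A ⟶[V] T)}

noncomputable def homEquiv (h : IsTensorUnit V B v A T η) (X : B) :
    (T ⟶ X) ≃ (v ⟶ (A ⟶[V] X)) :=
  haveI := h X
  (eHomEquiv V).trans <| ((Iso.refl _).homCongr (asIso (tensorComparison V B η X))).trans <|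
    ((ihom.adjunction v).homEquiv _ _).symm.trans ((ρ_ v).homCongr (Iso.refl _))

lemma homEquiv_apply (h : IsTensorUnit V B v A T η) {X : B} (f : T ⟶ X) :
    h.homEquiv X f = η ≫ eHomWhiskerLeft V A f := by
  rw [← tensorComparison_uncurry]
  simp [homEquiv, ← MonoidalClosed.homEquiv_symm_apply_eq]

lemma homEquiv_comp (h : IsTensorUnit V B v A T η) {X Y : B} (f : T ⟶ X) (g : X ⟶ Y) :
    h.homEquiv Y (f ≫ g) = h.homEquiv X f ≫ eHomWhiskerLeft V A g := by
  simp only [homEquiv_apply, eHomWhiskerLeft_comp, Category.assoc]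

lemma homEquiv_precomp (h : IsTensorUnit V B v A T η) {A' T' : B} {η' : v ⟶ (A' ⟶[V] T')}
    (h' : IsTensorUnit V B v A' T' η') {e : A ⟶ A'} {t : T ⟶ T'}
    (ht : η ≫ eHomWhiskerLeft V A t = η' ≫ eHomWhiskerRight V e T')
    {X : B} (f : T' ⟶ X) :
    h.homEquiv X (t ≫ f) = h'.homEquiv X f ≫ eHomWhiskerRight V e X := by
  rw [h.homEquiv_comp, h'.homEquiv_apply, h.homEquiv_apply, ht, Category.assoc, Category.assoc,
    eHom_whisker_exchange]

end IsTensorUnit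

lemma vRlp_eq_ordRlp {E : MorphismProperty B} (hT : Tensored V B)
    (hE : ClosedUnderTensors V B E) : vRlp V B E = ordRlp B E := by
  ext X₁ X₂ m
  refine ⟨fun h A₁ A₂ e he => (h e he).ordOrth, fun h A₁ A₂ e he => ?_⟩
  refine vOrth_iff_forall_vOrthAt.2 fun v => ?_
  obtain ⟨T₁, η₁, h₁⟩ := hT v A₁
  obtain ⟨T₂, η₂, h₂⟩ := hT v A₂
  obtain ⟨t, ht⟩ := (h₁.homEquiv T₂).surjective (η₂ ≫ eHomWhiskerRight V e T₂)
  rw [h₁.homEquiv_apply] at ht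
  exact (vOrthAt_iff_ordOrth h₁.homEquiv h₂.homEquiv h₁.homEquiv_comp h₂.homEquiv_comp
    (h₁.homEquiv_precomp h₂ ht)).2 (h t (hE v e η₁ η₂ h₁ h₂ he t ht))

end Tensor

section Opposite

section Braided

variable {V : Type u₁} [Category.{v₁} V] [MonoidalCategory V] [BraidedCategory V]
  {B : Type u₂} [Category.{v₂} B] [EnrichedOrdinaryCategory V B]

lemma vOrth_op_iff {A₁ A₂ X₁ X₂ : B} {e : A₁ ⟶ A₂} {m : X₁ ⟶ X₂} :
    VOrth V Bᵒᵖ m.op e.op ↔ VOrth V B e m := by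
  simp only [VOrth, eHomWhiskerLeft_op, eHomWhiskerRight_op, Quiver.Hom.unop_op, unop_op]
  exact IsPullback.flip_iff

lemma vLlp_eq_unop_vRlp_op (M : MorphismProperty B) :
    vLlp V B M = (vRlp V Bᵒᵖ M.op).unop := by
  ext A₁ A₂ e
  exact ⟨fun h _ _ m hm => vOrth_op_iff.2 (h m.unop hm),
    fun h _ _ m hm => vOrth_op_iff.1 (h m.op hm)⟩

end Braided

variable {B : Type u₂} [Category.{v₂} B]

lemma ordOrth_op_iff {A₁ A₂ X₁ X₂ : B} {e : A₁ ⟶ A₂} {m : X₁ ⟶ X₂} :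
    OrdOrth Bᵒᵖ m.op e.op ↔ OrdOrth B e m := by
  rw [OrdOrth, forall_comm]
  symm
  refine (opEquiv _ _).symm.forall_congr fun u => (opEquiv _ _).symm.forall_congr fun v => ?_
  change _ ↔ (v.op ≫ e.op = m.op ≫ u.op → ∃! d, m.op ≫ d = v.op ∧ d ≫ e.op = u.op)
  rw [← op_comp, ← op_comp, Quiver.Hom.op_inj.eq_iff, eq_comm]
  refine imp_congr_right fun _ => (opEquiv _ _).symm.existsUnique_congr fun d => ?_
  change _ ↔ m.op ≫ d.op = v.op ∧ d.op ≫ e.op = u.op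
  rw [← op_comp, ← op_comp, Quiver.Hom.op_inj.eq_iff, Quiver.Hom.op_inj.eq_iff, and_comm]

lemma ordLlp_eq_unop_ordRlp_op (M : MorphismProperty B) :
    ordLlp B M = (ordRlp Bᵒᵖ M.op).unop := by
  ext A₁ A₂ e
  exact ⟨fun h _ _ m hm => ordOrth_op_iff.2 (h m.unop hm),
    fun h _ _ m hm => ordOrth_op_iff.1 (h m.op hm)⟩

section Symmetric

variable {V : Type u₁} [Category.{v₁} V] [MonoidalCategory V] [SymmetricCategory V]
  [MonoidalClosed V] [EnrichedOrdinaryCategory V B]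

lemma isTensorUnit_op_iff {v : V} {X C : Bᵒᵖ} {ε : v ⟶ (C.unop ⟶[V] X.unop)} :
    IsTensorUnit V Bᵒᵖ v X C ε ↔ IsCotensorCounit V B v X.unop C.unop ε :=
  ⟨fun h A => h (op A), fun h A => h A.unop⟩

lemma Cotensored.op (h : Cotensored V B) : Tensored V Bᵒᵖ := fun v X =>
  let ⟨C, ε, hε⟩ := h v X.unop
  ⟨Opposite.op C, ε, isTensorUnit_op_iff.2 hε⟩

lemma ClosedUnderCotensors.op {M : MorphismProperty B} (h : ClosedUnderCotensors V B M) :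
    ClosedUnderTensors V Bᵒᵖ M.op := by
  intro v A₁ A₂ e T₁ T₂ η₁ η₂ h₁ h₂ he t ht
  rw [eHomWhiskerLeft_op, eHomWhiskerRight_op] at ht
  exact h v e.unop η₂ η₁ (isTensorUnit_op_iff.1 h₂) (isTensorUnit_op_iff.1 h₁) he t.unop ht.symm

lemma vLlp_eq_ordLlp {M : MorphismProperty B} (hC : Cotensored V B)
    (hM : ClosedUnderCotensors V B M) : vLlp V B M = ordLlp B M := by
  rw [vLlp_eq_unop_vRlp_op, ordLlp_eq_unop_ordRlp_op, vRlp_eq_ordRlp hC.op hM.op]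

end Symmetric

end Opposite

variable (V : Type u₁) [Category.{v₁} V] [MonoidalCategory V] [SymmetricCategory V]
  [MonoidalClosed V]
variable (B : Type u₂) [Category.{v₂} B] [EnrichedOrdinaryCategory V B]

/-- If `B` is tensored and `E` is closed under tensors then `E^{↓V} = E^↓`;
dually, if `B` is cotensored and `M` is closed under cotensors then `M^{↑V} = M^↑`. -/
theorem stmt5 :
    (∀ E : MorphismProperty B, Tensored V B → ClosedUnderTensors V B E →
      vRlp V B E = ordRlp B E) ∧
    (∀ M : MorphismProperty B, Cotensored V B → ClosedUnderCotensors V B M →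
      vLlp V B M = ordLlp B M) :=
  ⟨fun _ hT hE => vRlp_eq_ordRlp hT hE, fun _ hC hM => vLlp_eq_ordLlp hC hM⟩

end EnrichedFS
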